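/- arXiv:2201.06764 — 2 statements merged into one kernel-verified Lean document; each statement's English description precedes it below -/
import Mathlib

section
/- For 3 ≤ d ≤ 10 and any p > (d+2)/(d-2), the quantity (d-2)² - 4p·(2/(p-1))·(d-2-2/(p-1)) is strictly negative. -/
/-! Put `a = d - 2` and `q = 2 / (p - 1)`. Then `p q = q + 2`, so the quantity equals
`a² - 4 (q + 2) (a - q) = t² - 4 t - 4 a` with `t = a - 2 q`, and the hypothesis on `p` says
exactly `0 < t < a`. This quadratic in `t` is convex, negative at `t = 0` and equal to
`a (a - 8) ≤ 0` at `t = a`, hence negative on `[0, a)`; this is where `d ≤ 10` enters. -/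

lemma sq_lt_four_mul_add_two_mul_sub {a q : ℝ} (hq : 0 < q) (hqa : 2 * q < a) (ha : a ≤ 8) :
    a ^ 2 < 4 * (q + 2) * (a - q) := by
  nlinarith [mul_pos hq (sub_pos.mpr hqa)]

lemma sq_sub_four_mul_two_div_sub_one_neg {d p : ℝ} (hd : 2 < d) (hd' : d ≤ 10)
    (hp : (d + 2) / (d - 2) < p) :
    (d - 2) ^ 2 - 4 * p * ((2 / (p - 1)) * (d - 2 - 2 / (p - 1))) < 0 := by
  have ha : 0 < d - 2 := by linarith
  have hp_gap : 4 < (d - 2) * (p - 1) := by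
    rw [div_lt_iff₀ ha] at hp
    linarith
  have hp1 : 0 < p - 1 := pos_of_mul_pos_right (by linarith) ha.le
  set q := 2 / (p - 1) with hq_def
  have hq : 0 < q := by positivity
  have hpq : p * q = q + 2 := by
    rw [hq_def]
    field_simp
    ring
  have hqa : 2 * q < d - 2 := by
    rw [hq_def, ← mul_div_assoc, div_lt_iff₀ hp1]
    linarith
  have key := sq_lt_four_mul_add_two_mul_sub hq hqa (by linarith)
  calc (d - 2) ^ 2 - 4 * p * (q * (d - 2 - q))
      = (d - 2) ^ 2 - 4 * (q + 2) * (d - 2 - q) := by rw [← hpq]; ring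
    _ < 0 := by linarith

theorem stmt_2 (d : ℕ) (hd1 : 3 ≤ d) (hd2 : d ≤ 10) (p : ℝ)
    (hp : ((d : ℝ) + 2) / ((d : ℝ) - 2) < p) :
    ((d : ℝ) - 2) ^ 2 - 4 * p * ((2 / (p - 1)) * ((d : ℝ) - 2 - 2 / (p - 1))) < 0 :=
  sq_sub_four_mul_two_div_sub_one_neg (by exact_mod_cast hd1) (by exact_mod_cast hd2) hp
end

section
/- Let Z : (1,∞) → ℝ be C¹, negative, and satisfy Z' + 2rZ = -(λ+d) - f(r) where f(r) = Z(r)² + ((d-1)/r)Z(r) + g(r) with g continuous, g ≥ 0, and g(r) = O(e^{-c r²}) for some c > 0. If lim_{r→∞} Z(r) = L exists in ℝ (finite), then L = 0 and moreover lim_{r→∞} r·Z(r) = -(λ+d)/2. -/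
/-!
Multiplying the equation by `exp (r ^ 2)` gives `(exp (r ^ 2) * Z)' = -h * exp (r ^ 2)` with
`h = (λ + d) + Z ^ 2 + ((d - 1) / r) * Z + g → λ + d + L ^ 2`. Writing
`r * Z = (exp (r ^ 2) * Z) / (exp (r ^ 2) / r)` and applying L'Hôpital's rule in the `∞ / ∞` form,
whose derivative quotient is `-h / (2 - 1 / r ^ 2)`, yields `r * Z → -(λ + d + L ^ 2) / 2`.
Hence `Z → 0`, so `L = 0`.
-/

open Filter Topology Set Real

section LHopitalAtTop

variable {F G f g : ℝ → ℝ} {a : ℝ}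

theorem eventually_div_lt_of_deriv_div_lt_on_Ioi (hF : ∀ x ∈ Ioi a, HasDerivAt F (f x) x)
    (hG : ∀ x ∈ Ioi a, HasDerivAt G (g x) x) (hg : ∀ x ∈ Ioi a, 0 < g x)
    (hGtop : Tendsto G atTop atTop) {v w : ℝ} (hvw : v < w)
    (hfg : ∀ᶠ x in atTop, f x / g x < v) : ∀ᶠ x in atTop, F x / G x < w := by
  -- Past `b`, `f < v * g` makes `F - v * G` antitone, so `F ≤ v * G + O(1)`.
  obtain ⟨b, hb⟩ := eventually_atTop.1 (hfg.and (eventually_gt_atTop a))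
  have hab : a < b := (hb b le_rfl).2
  have hderiv : ∀ x ∈ Ici b, HasDerivAt (fun x => F x - v * G x) (f x - v * g x) x :=
    fun x hx => (hF x (hab.trans_le hx)).sub ((hG x (hab.trans_le hx)).const_mul v)
  have hanti : AntitoneOn (fun x => F x - v * G x) (Ici b) := by
    refine antitoneOn_of_hasDerivWithinAt_nonpos (convex_Ici b)
      (fun x hx => (hderiv x hx).continuousAt.continuousWithinAt)
      (fun x hx => (hderiv x (interior_subset hx)).hasDerivWithinAt) fun x hx => ?_
    rw [interior_Ici] at hx
    have hfx := (hb x (le_of_lt hx)).1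
    rw [div_lt_iff₀ (hg x (hab.trans hx))] at hfx
    linarith
  have hsmall : Tendsto (fun x => (F b - v * G b) / G x) atTop (𝓝 0) :=
    tendsto_const_nhds.div_atTop hGtop
  filter_upwards [hsmall.eventually (gt_mem_nhds (sub_pos.2 hvw)),
    hGtop.eventually_gt_atTop 0, eventually_ge_atTop b] with x hx hGx hbx
  rw [div_lt_iff₀ hGx] at hx ⊢
  linarith [hanti (mem_Ici.2 le_rfl) hbx hbx]

theorem lhopital_atTop_div_atTop_on_Ioi (hF : ∀ x ∈ Ioi a, HasDerivAt F (f x) x)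
    (hG : ∀ x ∈ Ioi a, HasDerivAt G (g x) x) (hg : ∀ x ∈ Ioi a, 0 < g x)
    (hGtop : Tendsto G atTop atTop) {ℓ : ℝ} (hfg : Tendsto (fun x => f x / g x) atTop (𝓝 ℓ)) :
    Tendsto (fun x => F x / G x) atTop (𝓝 ℓ) := by
  refine tendsto_order.2 ⟨fun l hl => ?_, fun u hu => ?_⟩
  · obtain ⟨v, hlv, hvℓ⟩ := exists_between hl
    have hneg := eventually_div_lt_of_deriv_div_lt_on_Ioi (F := -F) (f := -f)
      (fun x hx => (hF x hx).neg) hG hg hGtop (neg_lt_neg hlv)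
      (((tendsto_order.1 hfg).1 v hvℓ).mono fun x hx => by simpa [neg_div] using hx)
    exact hneg.mono fun x hx => by simpa [neg_div] using hx
  · obtain ⟨v, hℓv, hvu⟩ := exists_between hu
    exact eventually_div_lt_of_deriv_div_lt_on_Ioi hF hG hg hGtop hvu
      ((tendsto_order.1 hfg).2 v hℓv)

end LHopitalAtTop

theorem tendsto_exp_sq_div_atTop : Tendsto (fun r : ℝ => exp (r ^ 2) / r) atTop atTop := by
  refine tendsto_atTop_mono' atTop ?_ (by simpa using tendsto_exp_div_pow_atTop 1)
  filter_upwards [eventually_ge_atTop 1] with r hr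
  gcongr
  nlinarith

theorem tendsto_mul_of_hasDerivAt_neg_two_mul_sub {Z h : ℝ → ℝ} {a M : ℝ}
    (hZ : ∀ r ∈ Ioi a, HasDerivAt Z (-(2 * r * Z r) - h r) r) (hh : Tendsto h atTop (𝓝 M)) :
    Tendsto (fun r => r * Z r) atTop (𝓝 (-M / 2)) := by
  have hF : ∀ r ∈ Ioi (max a 1),
      HasDerivAt (fun r => exp (r ^ 2) * Z r) (-h r * exp (r ^ 2)) r := fun r hr => by
    refine (((hasDerivAt_pow 2 r).exp).fun_mul
      (hZ r ((le_max_left a 1).trans_lt hr))).congr_deriv ?_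
    ring
  have hG : ∀ r ∈ Ioi (max a 1),
      HasDerivAt (fun r => exp (r ^ 2) / r) (exp (r ^ 2) * (2 - 1 / r ^ 2)) r := fun r hr => by
    have hr0 : r ≠ 0 := by linarith [le_max_right a 1, mem_Ioi.1 hr]
    refine (((hasDerivAt_pow 2 r).exp).fun_div (hasDerivAt_id r) hr0).congr_deriv ?_
    simp only [id]
    field_simp
    ring
  have hg : ∀ r ∈ Ioi (max a 1), 0 < exp (r ^ 2) * (2 - 1 / r ^ 2) := fun r hr => by
    have hr1 : 1 < r := (le_max_right a 1).trans_lt hr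
    have : 1 / r ^ 2 < 1 := by rw [div_lt_one (by positivity)]; nlinarith
    have := exp_pos (r ^ 2)
    nlinarith
  have hlim : Tendsto (fun r => -h r * exp (r ^ 2) / (exp (r ^ 2) * (2 - 1 / r ^ 2)))
      atTop (𝓝 (-M / 2)) := by
    have h2 : Tendsto (fun r : ℝ => 2 - 1 / r ^ 2) atTop (𝓝 (2 - 0)) :=
      tendsto_const_nhds.sub (tendsto_const_nhds.div_atTop (tendsto_pow_atTop two_ne_zero))
    rw [sub_zero] at h2
    refine (hh.neg.div h2 two_ne_zero).congr' ?_
    filter_upwards with r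
    rw [Pi.div_apply, mul_comm (exp _), mul_div_mul_right _ _ (exp_pos _).ne']
  refine (lhopital_atTop_div_atTop_on_Ioi hF hG hg tendsto_exp_sq_div_atTop hlim).congr' ?_
  filter_upwards [eventually_ne_atTop 0] with r hr
  field_simp

theorem stmt_17_general (d : ℕ) (lam L : ℝ)
    (Z g : ℝ → ℝ)
    (hZC1 : ContDiffOn ℝ 1 Z (Set.Ioi 1))
    (hgO : ∃ c > 0, g =O[atTop] fun r : ℝ => Real.exp (-c * r ^ 2))
    (hode : ∀ r ∈ Set.Ioi (1 : ℝ),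
      deriv Z r + 2 * r * Z r
        = -(lam + d) - (Z r ^ 2 + (((d : ℝ) - 1) / r) * Z r + g r))
    (hlim : Tendsto Z atTop (nhds L)) :
    L = 0 ∧ Tendsto (fun r : ℝ => r * Z r) atTop (nhds (-(lam + d) / 2)) := by
  set h : ℝ → ℝ := fun r => (lam + d) + (Z r ^ 2 + (((d : ℝ) - 1) / r) * Z r + g r)
  have hZ : ∀ r ∈ Ioi (1 : ℝ), HasDerivAt Z (-(2 * r * Z r) - h r) r := fun r hr => by
    have hZr := ((hZC1.differentiableOn one_ne_zero r hr).differentiableAt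
      (isOpen_Ioi.mem_nhds hr)).hasDerivAt
    exact hZr.congr_deriv (by linarith [hode r hr])
  have hg0 : Tendsto g atTop (𝓝 0) := by
    obtain ⟨c, hc, hO⟩ := hgO
    refine hO.trans_tendsto (tendsto_exp_atBot.comp ?_)
    simpa only [neg_mul, Function.comp_def] using
      tendsto_neg_atTop_atBot.comp ((tendsto_pow_atTop two_ne_zero).const_mul_atTop hc)
  have hh : Tendsto h atTop (𝓝 ((lam + d) + (L ^ 2 + 0 * L + 0))) :=
    tendsto_const_nhds.add
      (((hlim.pow 2).add ((tendsto_const_nhds.div_atTop tendsto_id).mul hlim)).add hg0)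
  have hrZ := tendsto_mul_of_hasDerivAt_neg_two_mul_sub hZ hh
  have hZ0 : Tendsto Z atTop (𝓝 0) := by
    have hdiv := hrZ.mul tendsto_inv_atTop_zero
    rw [mul_zero] at hdiv
    refine hdiv.congr' ?_
    filter_upwards [eventually_ne_atTop 0] with r hr
    field_simp
  obtain rfl : L = 0 := tendsto_nhds_unique hlim hZ0
  exact ⟨rfl, by simpa using hrZ⟩

theorem stmt_17 (d : ℕ) (hd : 3 ≤ d) (lam L : ℝ)
    (Z g : ℝ → ℝ)
    (hZC1 : ContDiffOn ℝ 1 Z (Set.Ioi 1))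
    (hZneg : ∀ r ∈ Set.Ioi (1 : ℝ), Z r < 0)
    (hg : ContinuousOn g (Set.Ioi 1))
    (hgpos : ∀ r ∈ Set.Ioi (1 : ℝ), 0 ≤ g r)
    (hgO : ∃ c > 0, g =O[atTop] fun r : ℝ => Real.exp (-c * r ^ 2))
    (hode : ∀ r ∈ Set.Ioi (1 : ℝ),
      deriv Z r + 2 * r * Z r
        = -(lam + d) - (Z r ^ 2 + (((d : ℝ) - 1) / r) * Z r + g r))
    (hlim : Tendsto Z atTop (nhds L)) :
    L = 0 ∧ Tendsto (fun r : ℝ => r * Z r) atTop (nhds (-(lam + d) / 2)) :=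
  stmt_17_general d lam L Z g hZC1 hgO hode hlim
end
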